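/- arXiv:2512.22849 — 3 statements merged into one kernel-verified Lean document; each statement's English description precedes it below -/
import Mathlib

section
/- Let G be a profinite group isomorphic to Ẑ × I with I finite cyclic, acting continuously on a finite abelian group M. Then the continuous cohomology group H¹(G, M) fits in a short exact sequence 1 → H¹(Ẑ, M^I) → H¹(G, M) → H¹(I, M)^{Ẑ} → 1, and in particular |H¹(G, M)| = |M^{G}| · |H¹(I, M)^{G}| where H¹(Ẑ, M^I) has order |M^G|. -/
/-! Continuous group cohomology `H¹` in degree one, defined concretely via continuous
1-cocycles modulo continuous 1-coboundaries, and the inflation–restriction exact sequence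
for `Ẑ × I` with `I` finite cyclic, where `Ẑ = ∏_ℓ ℤ_ℓ` is the profinite completion of `ℤ`. -/

/-- The multiplicative group structure on `AddAut A` (composition), as in the older Mathlib,
where `AddAut A` was a multiplicative group. -/
instance addAutMulGroup (A : Type*) [Add A] : Group (AddAut A) where
  mul g h := AddEquiv.trans h g
  one := AddEquiv.refl _
  inv := AddEquiv.symm
  mul_assoc _ _ _ := rfl
  one_mul _ := rfl
  mul_one _ := rfl
  inv_mul_cancel := AddEquiv.self_trans_symm

theorem addAut_mul_apply {A : Type*} [Add A] (e₁ e₂ : AddAut A) (m : A) :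
    (e₁ * e₂) m = e₁ (e₂ m) :=
  rfl

section ContCohomology

variable (G : Type*) [Group G] [TopologicalSpace G]
variable (M : Type*) [AddCommGroup M] [TopologicalSpace M] [DiscreteTopology M]
variable (ρ : G →* AddAut M)

/-- Continuous 1-cocycles. -/
def contZ1 : AddSubgroup (G → M) where
  carrier := {f | Continuous f ∧ ∀ g h : G, f (g * h) = f g + ρ g (f h)}
  zero_mem' := ⟨continuous_const, fun g h => by simp⟩
  add_mem' := fun {f₁ f₂} h1 h2 => ⟨h1.1.add h2.1, fun g h => by
    simp only [Pi.add_apply, h1.2 g h, h2.2 g h, map_add]; abel⟩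
  neg_mem' := fun {f} hf => ⟨hf.1.neg, fun g h => by
    simp only [Pi.neg_apply, hf.2 g h, map_neg]; abel⟩

/-- Continuous 1-coboundaries. -/
def contB1 : AddSubgroup (G → M) where
  carrier := {f | Continuous f ∧ ∃ m : M, ∀ g : G, f g = ρ g m - m}
  zero_mem' := ⟨continuous_const, 0, fun g => by simp⟩
  add_mem' := fun {f₁ f₂} h1 h2 => by
    obtain ⟨c1, m₁, hm1⟩ := h1
    obtain ⟨c2, m₂, hm2⟩ := h2
    exact ⟨c1.add c2, m₁ + m₂, fun g => by
      simp only [Pi.add_apply, hm1 g, hm2 g, map_add]; abel⟩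
  neg_mem' := fun {f} hf => by
    obtain ⟨c, m, hm⟩ := hf
    exact ⟨c.neg, -m, fun g => by
      simp only [Pi.neg_apply, hm g, map_neg]; abel⟩

/-- Continuous first cohomology `H¹(G, M)`. -/
def contH1 := contZ1 G M ρ ⧸ (contB1 G M ρ).addSubgroupOf (contZ1 G M ρ)

instance : AddCommGroup (contH1 G M ρ) := QuotientAddGroup.Quotient.addCommGroup _

/-- The subgroup of `G`-invariants `M^G`. -/
def invariantsSubgroup : AddSubgroup M where
  carrier := {m | ∀ g : G, ρ g m = m}
  zero_mem' := fun g => by simp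
  add_mem' := fun {a b} ha hb g => by rw [map_add, ha g, hb g]
  neg_mem' := fun {a} ha g => by rw [map_neg, ha g]

variable {G M ρ}

/-- The map on continuous 1-cocycles induced by an automorphism of `M` commuting with the
`G`-action. -/
def z1Push (e : AddAut M) (hcomm : ∀ (g : G) (m : M), ρ g (e m) = e (ρ g m)) :
    contZ1 G M ρ →+ contZ1 G M ρ where
  toFun f := ⟨fun g => e (f.1 g),
    continuous_of_discreteTopology.comp f.2.1, fun g h => by
      dsimp only
      rw [f.2.2 g h, map_add, hcomm]⟩
  map_zero' := by ext g; simp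
  map_add' f₁ f₂ := by ext g; simp

/-- The induced map on `H¹(G, M)`. -/
def h1Push (e : AddAut M) (hcomm : ∀ (g : G) (m : M), ρ g (e m) = e (ρ g m)) :
    contH1 G M ρ →+ contH1 G M ρ :=
  QuotientAddGroup.map _ _ (z1Push e hcomm) (by
    intro f hf
    rw [AddSubgroup.mem_addSubgroupOf] at hf
    obtain ⟨hc, m, hm⟩ := hf
    rw [AddSubgroup.mem_comap, AddSubgroup.mem_addSubgroupOf]
    refine ⟨?_, e m, ?_⟩
    · show Continuous fun g : G => e (f.1 g)
      exact continuous_of_discreteTopology.comp f.2.1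
    · intro g
      show e (f.1 g) = ρ g (e m) - e m
      rw [hm g, map_sub, hcomm])

/-- Restricting an automorphism of `M` to a stable subgroup. -/
def restrictAut (e : AddAut M) (H : AddSubgroup M) (h : ∀ m ∈ H, e m ∈ H)
    (h' : ∀ m ∈ H, e.symm m ∈ H) : AddAut H where
  toFun m := ⟨e ↑m, h ↑m m.2⟩
  invFun m := ⟨e.symm ↑m, h' ↑m m.2⟩
  left_inv m := Subtype.ext (e.symm_apply_apply ↑m)
  right_inv m := Subtype.ext (e.apply_symm_apply ↑m)
  map_add' a b := Subtype.ext (map_add e (↑a) (↑b))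

end ContCohomology

instance (q : Nat.Primes) : Fact (Nat.Prime q) := ⟨q.2⟩

/-- The profinite completion `Ẑ ≅ ∏_ℓ ℤ_ℓ` of `ℤ`. -/
abbrev ZHat : Type := ∀ q : Nat.Primes, ℤ_[q]

section Setup

variable (I : Type) [Group I] [TopologicalSpace I]
variable (M : Type) [AddCommGroup M] [TopologicalSpace M] [DiscreteTopology M]
variable (ρ : (Multiplicative ZHat × I) →* AddAut M)

/-- Restriction of the action to `I`. -/
noncomputable def rhoI : I →* AddAut M := ρ.comp (MonoidHom.inr (Multiplicative ZHat) I)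

lemma rhoI_stable (z : Multiplicative ZHat) (m : M)
    (hm : m ∈ invariantsSubgroup I M (rhoI I M ρ)) :
    ρ (z, 1) m ∈ invariantsSubgroup I M (rhoI I M ρ) := by
  intro i
  show ρ (1, i) (ρ (z, 1) m) = ρ (z, 1) m
  have key : ((1 : Multiplicative ZHat), i) * (z, 1)
      = (z, 1) * ((1 : Multiplicative ZHat), i) := by
    simp [Prod.ext_iff]
  have hmi : ρ ((1 : Multiplicative ZHat), i) m = m := hm i
  rw [← addAut_mul_apply, ← map_mul, key, map_mul, addAut_mul_apply, hmi]

/-- The action of `Ẑ` on the invariants `M^I`. -/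
noncomputable def rhoZ : Multiplicative ZHat →* AddAut (invariantsSubgroup I M (rhoI I M ρ)) where
  toFun z := restrictAut (ρ (z, 1)) _ (fun m hm => rhoI_stable I M ρ z m hm)
    (fun m hm => by
      have : (ρ (z, 1)).symm m = ρ ((z, 1))⁻¹ m := by
        rw [map_inv]; rfl
      rw [this]
      have h2 : ((z, 1) : Multiplicative ZHat × I)⁻¹ = (z⁻¹, 1) := by
        ext <;> simp
      rw [h2]
      exact rhoI_stable I M ρ z⁻¹ m hm)
  map_one' := by
    ext m
    show ρ ((1 : Multiplicative ZHat), (1 : I)) ↑m = ↑m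
    have h1 : ((1 : Multiplicative ZHat), (1 : I)) = (1 : Multiplicative ZHat × I) := rfl
    rw [h1, map_one]
    rfl
  map_mul' z₁ z₂ := by
    ext m
    show ρ (z₁ * z₂, (1 : I)) ↑m = ρ (z₁, 1) (ρ (z₂, 1) ↑m)
    have h1 : ((z₁ * z₂, (1 : I)) : Multiplicative ZHat × I) = (z₁, 1) * (z₂, 1) := by
      simp [Prod.ext_iff]
    rw [h1, map_mul, addAut_mul_apply]

/-- The action of `z ∈ Ẑ = G/I` on `H¹(I, M)` (the conjugation action is trivial since
`G = Ẑ × I` is a product). -/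
noncomputable def zAct (z : Multiplicative ZHat) : contH1 I M (rhoI I M ρ) →+ contH1 I M (rhoI I M ρ) :=
  h1Push (ρ (z, 1)) (fun i m => by
    show ρ (1, i) (ρ (z, 1) m) = ρ (z, 1) (ρ (1, i) m)
    have key : ((1 : Multiplicative ZHat), i) * (z, 1)
        = (z, 1) * ((1 : Multiplicative ZHat), i) := by
      simp [Prod.ext_iff]
    rw [← addAut_mul_apply, ← map_mul, key, map_mul, addAut_mul_apply])

end Setup

/-! Write `σ` for the topological generator `ofAdd 1` of `Ẑ`. Since `ℕ` is dense in `Ẑ`, a closed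
submonoid containing `σ` is everything, so a continuous cocycle on `Ẑ` is determined by its value
at `σ`. Every value `m` occurs: the affine permutation `y ↦ σ • y + m` of a finite discrete module
`N` has finite order, so it extends (through some `ZMod n`) to a locally constant homomorphism on
`Ẑ`, whose translation part is the required cocycle. Thus `Z¹(Ẑ, N) ≅ N`, and as the coboundary map
`N → Z¹(Ẑ, N)` has kernel `N^Ẑ`, `|H¹(Ẑ, N)| = |N^Ẑ|`.

For `G = Ẑ × I`, inflation from `H¹(Ẑ, M^I)` is injective with image the kernel of restriction to
`I`, as for any product. A class `[c] ∈ H¹(I, M)` fixed by `σ` lifts: if `σ • c - c = δm`, let `F`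
be the cocycle on `Ẑ` with `F σ = m`; then `(z, i) ↦ F z + z • c i` is a cocycle on `G` restricting
to `c`, because `w ↦ i • F w - F w` and `w ↦ w • c i - c i` are cocycles on `Ẑ` agreeing at `σ`. -/

theorem AddMonoidHom.card_eq_card_range_mul_card_ker {A B : Type*} [AddGroup A] [AddGroup B]
    (f : A →+ B) : Nat.card A = Nat.card f.range * Nat.card f.ker := by
  rw [AddSubgroup.card_eq_card_quotient_mul_card_addSubgroup f.ker,
    Nat.card_congr (QuotientAddGroup.quotientKerEquivRange f).toEquiv]

theorem Function.Exact.card_eq_card_mul_card_range {A B C : Type*} [AddGroup A] [AddGroup B]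
    [AddGroup C] {f : A →+ B} {g : B →+ C} (h : Function.Exact f g)
    (hf : Function.Injective f) :
    Nat.card B = Nat.card A * Nat.card g.range := by
  rw [g.card_eq_card_range_mul_card_ker, h.addMonoidHom_ker_eq, mul_comm,
    Nat.card_congr (f.ofInjective hf).toEquiv]

section Cocycles

variable {G : Type*} [Group G] [TopologicalSpace G]
variable {M : Type*} [AddCommGroup M] [TopologicalSpace M] [DiscreteTopology M]
variable {ρ : G →* AddAut M}

theorem contZ1.apply_one {f : G → M} (hf : f ∈ contZ1 G M ρ) : f 1 = 0 := by
  simpa using hf.2 1 1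

theorem coboundary_mem_contZ1 {m : M} (hm : Continuous fun g : G => ρ g m) :
    (fun g : G => ρ g m - m) ∈ contZ1 G M ρ :=
  ⟨hm.sub continuous_const, fun g h => by
    simp only [map_mul, addAut_mul_apply, map_sub]
    abel⟩

variable (ρ) in
def coboundaryHom (hρ : ∀ m : M, Continuous fun g : G => ρ g m) : M →+ contZ1 G M ρ where
  toFun m := ⟨_, coboundary_mem_contZ1 (hρ m)⟩
  map_zero' := by ext; simp
  map_add' _ _ := by
    ext g
    simp only [AddSubgroup.coe_add, Pi.add_apply, map_add]
    abel

theorem range_coboundaryHom (hρ : ∀ m : M, Continuous fun g : G => ρ g m) :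
    (coboundaryHom ρ hρ).range = (contB1 G M ρ).addSubgroupOf (contZ1 G M ρ) := by
  ext f
  rw [AddMonoidHom.mem_range, AddSubgroup.mem_addSubgroupOf]
  constructor
  · rintro ⟨m, rfl⟩
    exact ⟨(hρ m).sub continuous_const, m, fun g => rfl⟩
  · rintro ⟨-, m, hm⟩
    exact ⟨m, Subtype.ext (funext fun g => (hm g).symm)⟩

theorem ker_coboundaryHom (hρ : ∀ m : M, Continuous fun g : G => ρ g m) :
    (coboundaryHom ρ hρ).ker = invariantsSubgroup G M ρ := by
  ext m
  simp only [AddMonoidHom.mem_ker, Subtype.ext_iff, funext_iff]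
  exact forall_congr' fun g => sub_eq_zero

theorem card_contH1_mul_card (hρ : ∀ m : M, Continuous fun g : G => ρ g m) :
    Nat.card (contH1 G M ρ) * Nat.card M =
      Nat.card (contZ1 G M ρ) * Nat.card (invariantsSubgroup G M ρ) := by
  rw [(coboundaryHom ρ hρ).card_eq_card_range_mul_card_ker, ker_coboundaryHom,
    range_coboundaryHom, ← mul_assoc,
    AddSubgroup.card_eq_card_quotient_mul_card_addSubgroup
      ((contB1 G M ρ).addSubgroupOf (contZ1 G M ρ))]
  rfl

theorem contH1.mk_eq_mk_iff {f f' : contZ1 G M ρ} :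
    (QuotientAddGroup.mk f : contH1 G M ρ) = QuotientAddGroup.mk f' ↔
      ∃ m : M, ∀ g, f.1 g - f'.1 g = ρ g m - m := by
  rw [QuotientAddGroup.eq_iff_sub_mem, AddSubgroup.mem_addSubgroupOf]
  exact ⟨fun h => h.2, fun h => ⟨(f - f').2.1, h⟩⟩

theorem contH1.mk_eq_zero_iff {f : contZ1 G M ρ} :
    (QuotientAddGroup.mk f : contH1 G M ρ) = 0 ↔ ∃ m : M, ∀ g, f.1 g = ρ g m - m := by
  rw [QuotientAddGroup.eq_zero_iff, AddSubgroup.mem_addSubgroupOf]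
  exact ⟨fun h => h.2, fun h => ⟨f.2.1, h⟩⟩

theorem contH1.mk_coboundaryHom (hρ : ∀ m : M, Continuous fun g : G => ρ g m) (m : M) :
    (QuotientAddGroup.mk (coboundaryHom ρ hρ m) : contH1 G M ρ) = 0 :=
  contH1.mk_eq_zero_iff.2 ⟨m, fun _ => rfl⟩

variable {Q : Type*} [Group Q] [TopologicalSpace Q]
variable {N : Type*} [AddCommGroup N] [TopologicalSpace N] [DiscreteTopology N]
variable {τ : Q →* AddAut N}

def contZ1.map (ψ : G →* Q) (hψ : Continuous ψ) (j : N →+ M)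
    (hj : ∀ g n, j (τ (ψ g) n) = ρ g (j n)) : contZ1 Q N τ →+ contZ1 G M ρ where
  toFun f := ⟨fun g => j (f.1 (ψ g)), continuous_of_discreteTopology.comp (f.2.1.comp hψ),
    fun g h => by
      dsimp only
      rw [map_mul, f.2.2, map_add, hj]⟩
  map_zero' := by ext; simp
  map_add' _ _ := by ext; simp

def contH1.map (ψ : G →* Q) (hψ : Continuous ψ) (j : N →+ M)
    (hj : ∀ g n, j (τ (ψ g) n) = ρ g (j n)) : contH1 Q N τ →+ contH1 G M ρ :=
  QuotientAddGroup.map _ _ (contZ1.map ψ hψ j hj) fun f hf => by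
    obtain ⟨m, hm⟩ := contH1.mk_eq_zero_iff.1 ((QuotientAddGroup.eq_zero_iff f).2 hf)
    refine (QuotientAddGroup.eq_zero_iff (contZ1.map ψ hψ j hj f)).1
      (contH1.mk_eq_zero_iff.2 ⟨j m, fun g => ?_⟩)
    show j (f.1 (ψ g)) = ρ g (j m) - j m
    rw [hm, map_sub, hj]

end Cocycles

namespace PadicInt

variable {p : ℕ} [Fact p.Prime]

theorem continuous_toZModPow (k : ℕ) : Continuous (toZModPow k : ℤ_[p] → ZMod (p ^ k)) := by
  refine continuous_of_continuousAt_zero (toZModPow (p := p) k) ?_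
  rw [ContinuousAt, map_zero, nhds_discrete (ZMod (p ^ k)), Filter.tendsto_pure]
  filter_upwards [Metric.closedBall_mem_nhds (0 : ℤ_[p])
    (zpow_pos (Nat.cast_pos.2 (Fact.out : p.Prime).pos) (-k : ℤ))] with x hx
  rwa [mem_closedBall_zero_iff, norm_le_pow_iff_mem_span_pow, ← ker_toZModPow] at hx

theorem dist_le_of_toZModPow_eq {k : ℕ} {x y : ℤ_[p]} (h : toZModPow k x = toZModPow k y) :
    dist x y ≤ (p : ℝ) ^ (-k : ℤ) := by
  rwa [dist_eq_norm, norm_le_pow_iff_mem_span_pow, ← ker_toZModPow, RingHom.mem_ker, map_sub,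
    sub_eq_zero]

end PadicInt

namespace ZHat

open Multiplicative

noncomputable def toZMod (n : ℕ) [NeZero n] : ZHat →+* ZMod n :=
  (ZMod.equivPi n (NeZero.ne n)).symm.toRingHom.comp <| RingHom.pi fun p =>
    have : Fact (p : ℕ).Prime := ⟨Nat.prime_of_mem_primeFactors p.2⟩
    (PadicInt.toZModPow (n.factorization p)).comp
      (Pi.evalRingHom (fun q : Nat.Primes => ℤ_[q]) ⟨p, this.out⟩)

theorem continuous_toZMod (n : ℕ) [NeZero n] : Continuous (toZMod n) :=
  (continuous_of_discreteTopology (f := ⇑(ZMod.equivPi n (NeZero.ne n)).symm)).comp <|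
    continuous_pi fun p =>
      have : Fact (p : ℕ).Prime := ⟨Nat.prime_of_mem_primeFactors p.2⟩
      (PadicInt.continuous_toZModPow _).comp (continuous_apply _)

theorem dist_apply_le_of_toZMod_eq {n : ℕ} [NeZero n] {x y : ZHat}
    (h : toZMod n x = toZMod n y) (q : Nat.Primes) (hq : (q : ℕ) ∈ n.primeFactors) :
    dist (x q) (y q) ≤ (q : ℝ) ^ (-(n.factorization q) : ℤ) :=
  PadicInt.dist_le_of_toZModPow_eq
    (congrFun ((ZMod.equivPi n (NeZero.ne n)).symm.injective h) ⟨q, hq⟩)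

theorem denseRange_natCast : DenseRange (Nat.cast : ℕ → ZHat) := by
  intro x
  rw [mem_closure_iff_nhds]
  intro t ht
  rw [nhds_pi, Filter.mem_pi] at ht
  obtain ⟨S, hS, u, hu, hut⟩ := ht
  have hball : ∀ q ∈ S, ∀ᶠ k : ℕ in Filter.atTop,
      Metric.closedBall (x q) ((q : ℝ) ^ (-k : ℤ)) ⊆ u q := by
    intro q _
    obtain ⟨ε, hε, hεu⟩ := Metric.nhds_basis_closedBall.mem_iff.1 (hu q)
    obtain ⟨k₀, hk₀⟩ := PadicInt.exists_pow_neg_lt q hε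
    refine Filter.eventually_atTop.2 ⟨k₀, fun k hk => ?_⟩
    refine (Metric.closedBall_subset_closedBall (hk₀.le.trans' ?_)).trans hεu
    exact zpow_le_zpow_right₀ (by exact_mod_cast q.2.one_le) (by omega)
  obtain ⟨k, hk⟩ := ((Filter.eventually_all_finite hS).2 hball).exists
  -- the residue of `x` modulo `n` pins down each coordinate `q ∈ S` to within `q ^ (-k)`
  set n := (∏ q ∈ hS.toFinset, (q : ℕ)) ^ (k + 1)
  have hdvd : ∀ q ∈ S, (q : ℕ) ∣ ∏ q ∈ hS.toFinset, (q : ℕ) := fun q hq =>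
    Finset.dvd_prod_of_mem _ (hS.mem_toFinset.2 hq)
  have hn : n ≠ 0 := pow_ne_zero _ (Finset.prod_ne_zero_iff.2 fun q _ => q.2.ne_zero)
  have : NeZero n := ⟨hn⟩
  refine ⟨((toZMod n x).val : ZHat), hut fun q hq => hk q hq ?_, _, rfl⟩
  have hqn : (q : ℕ) ∈ n.primeFactors :=
    Nat.mem_primeFactors.2 ⟨q.2, (hdvd q hq).trans (dvd_pow_self _ k.succ_ne_zero), hn⟩
  have hval : k ≤ n.factorization q := by
    rw [Nat.factorization_pow, Finsupp.smul_apply, smul_eq_mul]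
    have := (q.2.dvd_iff_one_le_factorization
      (Finset.prod_ne_zero_iff.2 fun q _ => q.2.ne_zero)).1 (hdvd q hq)
    nlinarith
  rw [Metric.mem_closedBall]
  refine (dist_apply_le_of_toZMod_eq (by rw [map_natCast, ZMod.natCast_zmod_val]) q hqn).trans ?_
  exact zpow_le_zpow_right₀ (by exact_mod_cast q.2.one_le) (by omega)

theorem submonoid_eq_top {S : Submonoid (Multiplicative ZHat)}
    (hS : IsClosed (S : Set (Multiplicative ZHat))) (h : ofAdd 1 ∈ S) : S = ⊤ := by
  have hnat : Set.range (Nat.cast : ℕ → ZHat) ⊆ ofAdd ⁻¹' S := by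
    rintro _ ⟨n, rfl⟩
    simpa [← ofAdd_nsmul] using S.pow_mem h n
  have huniv := (hS.preimage continuous_ofAdd).closure_subset_iff.2 hnat
  rw [denseRange_natCast.closure_range] at huniv
  exact (Submonoid.eq_top_iff' S).2 fun z => huniv (Set.mem_univ z.toAdd)

theorem exists_monoidHom_apply_ofAdd_one {H : Type*} [Group H] [Finite H] (τ : H) :
    ∃ T : Multiplicative ZHat →* H, IsLocallyConstant T ∧ T (ofAdd 1) = τ := by
  have : NeZero (orderOf τ) := ⟨(orderOf_pos τ).ne'⟩
  refine ⟨{ toFun := fun z => τ ^ (toZMod (orderOf τ) z.toAdd).val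
            map_one' := by simp
            map_mul' := fun z w => by
              simp only [toAdd_mul, map_add, ZMod.val_add, pow_mod_orderOf, pow_add] }, ?_, ?_⟩
  · exact ((IsLocallyConstant.iff_continuous _).2
      ((continuous_toZMod _).comp continuous_toAdd)).comp fun a => τ ^ a.val
  · simp [ZMod.val_one_eq_one_mod, pow_mod_orderOf]

variable {P : Type*} [AddCommGroup P] [TopologicalSpace P] [DiscreteTopology P]
variable {φ : Multiplicative ZHat →* AddAut P}

theorem contZ1_ext {f f' : Multiplicative ZHat → P} (hf : f ∈ contZ1 (Multiplicative ZHat) P φ)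
    (hf' : f' ∈ contZ1 (Multiplicative ZHat) P φ) (h : f (ofAdd 1) = f' (ofAdd 1)) : f = f' := by
  let S : Submonoid (Multiplicative ZHat) :=
    { carrier := {z | f z = f' z}
      one_mem' := (contZ1.apply_one hf).trans (contZ1.apply_one hf').symm
      mul_mem' := fun {z w} (hz : f z = f' z) (hw : f w = f' w) => by
        show f (z * w) = f' (z * w)
        rw [hf.2, hf'.2, hz, hw] }
  have hS : S = ⊤ := submonoid_eq_top (isClosed_eq hf.1 hf'.1) h
  exact funext fun z => (hS ▸ Submonoid.mem_top z : z ∈ S)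

theorem exists_mem_contZ1_apply_ofAdd_one [Finite P] (hφ : ∀ m : P, Continuous fun z => φ z m)
    (m₀ : P) : ∃ F ∈ contZ1 (Multiplicative ZHat) P φ, F (ofAdd 1) = m₀ := by
  -- `T z` is the affine map `y ↦ φ z y + F z`; build it as a homomorphism to `Perm P`
  obtain ⟨T, hT, hT1⟩ :=
    exists_monoidHom_apply_ofAdd_one ((φ (ofAdd 1)).toEquiv.trans (Equiv.addRight m₀))
  have hTcont (y : P) : Continuous fun z => T z y := (hT.comp fun t => t y).continuous
  let S : Submonoid (Multiplicative ZHat) :=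
    { carrier := {z | ∀ y, T z y = φ z y + T z 0}
      one_mem' := fun y => by
        rw [map_one, map_one]
        exact (add_zero y).symm
      mul_mem' := fun {z w} (hz : ∀ y, _) (hw : ∀ y, _) y => by
        simp only [map_mul, Equiv.Perm.mul_apply, addAut_mul_apply]
        rw [hw y, hw 0, hz, hz (φ w 0 + T w 0), map_add, map_add]
        abel }
  have hclosed : IsClosed {z | ∀ y, T z y = φ z y + T z 0} := by
    rw [Set.ofPred_forall]
    exact isClosed_iInter fun y => isClosed_eq (hTcont y) ((hφ y).add (hTcont 0))
  have hS : S = ⊤ := submonoid_eq_top hclosed fun y => by simp [hT1]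
  have haff (z : Multiplicative ZHat) : ∀ y, T z y = φ z y + T z 0 :=
    (hS ▸ Submonoid.mem_top z : z ∈ S)
  refine ⟨fun z => T z 0, ⟨hTcont 0, fun z w => ?_⟩, by simp [hT1]⟩
  show T (z * w) 0 = T z 0 + φ z (T w 0)
  rw [map_mul, Equiv.Perm.mul_apply, haff z]
  exact add_comm _ _

theorem card_contH1 [Finite P] (hφ : ∀ m : P, Continuous fun z => φ z m) :
    Nat.card (contH1 (Multiplicative ZHat) P φ) =
      Nat.card (invariantsSubgroup (Multiplicative ZHat) P φ) := by
  have heval : Function.Bijective fun f : contZ1 (Multiplicative ZHat) P φ => f.1 (ofAdd 1) :=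
    ⟨fun f f' h => Subtype.ext (contZ1_ext f.2 f'.2 h), fun m₀ =>
      let ⟨F, hF, hF1⟩ := exists_mem_contZ1_apply_ofAdd_one hφ m₀
      ⟨⟨F, hF⟩, hF1⟩⟩
  have h := card_contH1_mul_card hφ
  rw [Nat.card_congr (Equiv.ofBijective _ heval), mul_comm (Nat.card P)] at h
  exact Nat.eq_of_mul_eq_mul_right Nat.card_pos h

end ZHat

section ProductAction

variable {Q I : Type*} [Group Q] [Group I] {M : Type*} [AddCommGroup M]
variable (ρ : Q × I →* AddAut M)

theorem apply_mk_eq_inl_inr (q : Q) (i : I) (m : M) : ρ (q, i) m = ρ (q, 1) (ρ (1, i) m) := by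
  rw [← addAut_mul_apply, ← map_mul, Prod.mk_mul_mk, mul_one, one_mul]

theorem apply_mk_eq_inr_inl (q : Q) (i : I) (m : M) : ρ (q, i) m = ρ (1, i) (ρ (q, 1) m) := by
  rw [← addAut_mul_apply, ← map_mul, Prod.mk_mul_mk, mul_one, one_mul]

theorem apply_inr_apply_inl_comm (q : Q) (i : I) (m : M) :
    ρ (1, i) (ρ (q, 1) m) = ρ (q, 1) (ρ (1, i) m) :=
  (apply_mk_eq_inr_inl ρ q i m).symm.trans (apply_mk_eq_inl_inr ρ q i m)

variable [TopologicalSpace Q] [TopologicalSpace I] [TopologicalSpace M] [DiscreteTopology M]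

theorem mem_contZ1_prod_of_apply_inr_sub_eq (hcont : Continuous fun x : (Q × I) × M => ρ x.1 x.2)
    {c : I → M} (hc : c ∈ contZ1 I M (ρ.comp (MonoidHom.inr Q I)))
    {F : Q → M} (hF : F ∈ contZ1 Q M (ρ.comp (MonoidHom.inl Q I)))
    (hFc : ∀ i w, ρ (1, i) (F w) - F w = ρ (w, 1) (c i) - c i) :
    (fun g : Q × I => F g.1 + ρ (g.1, 1) (c g.2)) ∈ contZ1 (Q × I) M ρ := by
  refine ⟨(hF.1.comp continuous_fst).add (hcont.comp
    ((continuous_fst.prodMk continuous_const).prodMk (hc.1.comp continuous_snd))), ?_⟩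
  rintro ⟨z, i⟩ ⟨w, j⟩
  show F (z * w) + ρ (z * w, 1) (c (i * j)) =
    F z + ρ (z, 1) (c i) + ρ (z, i) (F w + ρ (w, 1) (c j))
  have hzw (m : M) : ρ (z * w, 1) m = ρ (z, 1) (ρ (w, 1) m) := by
    rw [← addAut_mul_apply, ← map_mul, Prod.mk_mul_mk, mul_one]
  rw [show F (z * w) = F z + ρ (z, 1) (F w) from hF.2 z w,
    show c (i * j) = c i + ρ (1, i) (c j) from hc.2 i j, hzw, apply_mk_eq_inl_inr ρ z i,
    map_add (ρ (1, i)), eq_add_of_sub_eq' (hFc i w), apply_inr_apply_inl_comm]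
  simp only [map_add, map_sub]
  abel

end ProductAction

section InflationRestriction

open Multiplicative

variable {I : Type} [Group I] {M : Type} [AddCommGroup M]
variable (ρ : (Multiplicative ZHat × I) →* AddAut M)

theorem rhoI_apply_rho_inl (z : Multiplicative ZHat) (i : I) (m : M) :
    rhoI I M ρ i (ρ (z, 1) m) = ρ (z, 1) (rhoI I M ρ i m) :=
  apply_inr_apply_inl_comm ρ z i m

theorem rho_apply_of_mem_invariants (z : Multiplicative ZHat) (i : I) {m : M}
    (hm : m ∈ invariantsSubgroup I M (rhoI I M ρ)) : ρ (z, i) m = ρ (z, 1) m := by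
  rw [apply_mk_eq_inl_inr]
  exact congrArg (ρ (z, 1)) (hm i)

variable [TopologicalSpace M] [DiscreteTopology M]

theorem apply_inr_sub_eq_of_apply_ofAdd_one
    (hinl : ∀ m : M, Continuous fun z : Multiplicative ZHat => ρ (z, 1) m)
    {F : Multiplicative ZHat → M}
    (hF : F ∈ contZ1 (Multiplicative ZHat) M (ρ.comp (MonoidHom.inl _ I))) (i : I) {x : M}
    (hx : ρ (1, i) (F (ofAdd 1)) - F (ofAdd 1) = ρ (ofAdd 1, 1) x - x) (w : Multiplicative ZHat) :
    ρ (1, i) (F w) - F w = ρ (w, 1) x - x := by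
  -- both sides are cocycles in `w`, and they agree at the generator
  refine congrFun (ZHat.contZ1_ext (φ := ρ.comp (MonoidHom.inl _ I))
    (f := fun w => ρ (1, i) (F w) - F w) (f' := fun w => ρ (w, 1) x - x)
    ⟨(continuous_of_discreteTopology (f := fun m => ρ (1, i) m - m)).comp hF.1, fun z w => ?_⟩
    (coboundary_mem_contZ1 (hinl x)) hx) w
  show ρ (1, i) (F (z * w)) - F (z * w) =
    ρ (1, i) (F z) - F z + ρ (z, 1) (ρ (1, i) (F w) - F w)
  rw [show F (z * w) = F z + ρ (z, 1) (F w) from hF.2 z w, map_add, apply_inr_apply_inl_comm,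
    map_sub]
  abel

variable [TopologicalSpace I]

theorem zAct_mk (z : Multiplicative ZHat) (c : contZ1 I M (rhoI I M ρ)) :
    zAct I M ρ z (QuotientAddGroup.mk c) =
      QuotientAddGroup.mk (z1Push (ρ (z, 1)) (rhoI_apply_rho_inl ρ z) c) :=
  rfl

noncomputable def inflZ1 :
    contZ1 (Multiplicative ZHat) (invariantsSubgroup I M (rhoI I M ρ)) (rhoZ I M ρ) →+
      contZ1 (Multiplicative ZHat × I) M ρ :=
  contZ1.map (MonoidHom.fst _ _) continuous_fst (AddSubgroup.subtype _)
    fun g m => (rho_apply_of_mem_invariants ρ g.1 g.2 m.2).symm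

noncomputable def inflH1 :
    contH1 (Multiplicative ZHat) (invariantsSubgroup I M (rhoI I M ρ)) (rhoZ I M ρ) →+
      contH1 (Multiplicative ZHat × I) M ρ :=
  contH1.map (MonoidHom.fst _ _) continuous_fst (AddSubgroup.subtype _)
    fun g m => (rho_apply_of_mem_invariants ρ g.1 g.2 m.2).symm

noncomputable def resZ1 : contZ1 (Multiplicative ZHat × I) M ρ →+ contZ1 I M (rhoI I M ρ) :=
  contZ1.map (MonoidHom.inr _ _) (continuous_const.prodMk continuous_id) (AddMonoidHom.id M)
    fun _ _ => rfl

noncomputable def resH1 : contH1 (Multiplicative ZHat × I) M ρ →+ contH1 I M (rhoI I M ρ) :=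
  contH1.map (MonoidHom.inr _ _) (continuous_const.prodMk continuous_id) (AddMonoidHom.id M)
    fun _ _ => rfl

theorem inflH1_mk (h : contZ1 (Multiplicative ZHat) (invariantsSubgroup I M (rhoI I M ρ))
    (rhoZ I M ρ)) : inflH1 ρ (QuotientAddGroup.mk h) = QuotientAddGroup.mk (inflZ1 ρ h) :=
  rfl

theorem resH1_mk (f : contZ1 (Multiplicative ZHat × I) M ρ) :
    resH1 ρ (QuotientAddGroup.mk f) = QuotientAddGroup.mk (resZ1 ρ f) :=
  rfl

theorem injective_inflH1 : Function.Injective (inflH1 ρ) := by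
  refine (injective_iff_map_eq_zero _).2 fun c hc => ?_
  obtain ⟨h, rfl⟩ := QuotientAddGroup.mk_surjective c
  obtain ⟨m, hm⟩ := contH1.mk_eq_zero_iff.1 ((inflH1_mk ρ h).symm.trans hc)
  have hmI : m ∈ invariantsSubgroup I M (rhoI I M ρ) := fun i => by
    have hmi : ((h.1 1 : _) : M) = ρ (1, i) m - m := hm (1, i)
    rw [contZ1.apply_one h.2, ZeroMemClass.coe_zero, eq_comm, sub_eq_zero] at hmi
    exact hmi
  exact contH1.mk_eq_zero_iff.2 ⟨⟨m, hmI⟩, fun z => Subtype.ext (hm (z, 1))⟩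

theorem exists_inflZ1_eq_of_apply_inr_eq_zero {f : contZ1 (Multiplicative ZHat × I) M ρ}
    (hf : ∀ i, f.1 (1, i) = 0) : ∃ h, inflZ1 ρ h = f := by
  have hfz (z : Multiplicative ZHat) (i : I) : f.1 (z, i) = f.1 (z, 1) := by
    simpa [hf] using f.2.2 (z, 1) (1, i)
  have hmem (z : Multiplicative ZHat) : f.1 (z, 1) ∈ invariantsSubgroup I M (rhoI I M ρ) :=
    fun i => show ρ (1, i) (f.1 (z, 1)) = f.1 (z, 1) by
      simpa [hf, hfz] using (f.2.2 (1, i) (z, 1)).symm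
  refine ⟨⟨fun z => ⟨f.1 (z, 1), hmem z⟩, ?_, fun z w => Subtype.ext ?_⟩,
    Subtype.ext (funext fun g => (hfz g.1 g.2).symm)⟩
  · exact (f.2.1.comp (continuous_id.prodMk continuous_const)).subtype_mk _
  · show f.1 (z * w, 1) = f.1 (z, 1) + ρ (z, 1) (f.1 (w, 1))
    simpa using f.2.2 (z, 1) (w, 1)

theorem exact_inflH1_resH1 (hρ : ∀ m : M, Continuous fun g => ρ g m) :
    Function.Exact (inflH1 ρ) (resH1 ρ) := by
  intro c
  constructor
  · intro hc
    obtain ⟨f, rfl⟩ := QuotientAddGroup.mk_surjective c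
    obtain ⟨m, hm⟩ := contH1.mk_eq_zero_iff.1 hc
    obtain ⟨h, hh⟩ := exists_inflZ1_eq_of_apply_inr_eq_zero ρ
      (f := f - coboundaryHom ρ hρ m) fun i => sub_eq_zero.2 (hm i)
    refine ⟨QuotientAddGroup.mk h, ?_⟩
    rw [inflH1_mk, hh, QuotientAddGroup.mk_sub, contH1.mk_coboundaryHom, sub_zero]
  · rintro ⟨d, rfl⟩
    obtain ⟨h, rfl⟩ := QuotientAddGroup.mk_surjective d
    rw [inflH1_mk, resH1_mk]
    refine contH1.mk_eq_zero_iff.2 ⟨0, fun i => ?_⟩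
    show ((h.1 1 : _) : M) = rhoI I M ρ i 0 - 0
    rw [contZ1.apply_one h.2, map_zero, sub_zero, ZeroMemClass.coe_zero]

theorem zAct_resH1 (z : Multiplicative ZHat) (c : contH1 (Multiplicative ZHat × I) M ρ) :
    zAct I M ρ z (resH1 ρ c) = resH1 ρ c := by
  obtain ⟨f, rfl⟩ := QuotientAddGroup.mk_surjective c
  rw [resH1_mk, zAct_mk]
  refine contH1.mk_eq_mk_iff.2 ⟨f.1 (z, 1), fun i => ?_⟩
  show ρ (z, 1) (f.1 (1, i)) - f.1 (1, i) = ρ (1, i) (f.1 (z, 1)) - f.1 (z, 1)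
  have h₁ := f.2.2 (z, 1) (1, i)
  have h₂ := f.2.2 (1, i) (z, 1)
  rw [Prod.mk_mul_mk, mul_one, one_mul] at h₁ h₂
  rw [sub_eq_sub_iff_add_eq_add, add_comm, ← h₁, h₂, add_comm]

theorem exists_mem_contZ1_apply_inr_eq [Finite M]
    (hcont : Continuous fun x : (Multiplicative ZHat × I) × M => ρ x.1 x.2)
    (c : contZ1 I M (rhoI I M ρ)) (m₀ : M)
    (hm₀ : ∀ i, ρ (ofAdd 1, 1) (c.1 i) - c.1 i = ρ (1, i) m₀ - m₀) :
    ∃ f ∈ contZ1 (Multiplicative ZHat × I) M ρ, ∀ i, f (1, i) = c.1 i := by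
  have hinl (m : M) : Continuous fun z : Multiplicative ZHat => ρ (z, 1) m :=
    hcont.comp ((continuous_id.prodMk continuous_const).prodMk continuous_const)
  obtain ⟨F, hF, hF1⟩ := ZHat.exists_mem_contZ1_apply_ofAdd_one
    (φ := ρ.comp (MonoidHom.inl _ I)) hinl m₀
  have hFc (i : I) (w : Multiplicative ZHat) :=
    apply_inr_sub_eq_of_apply_ofAdd_one ρ hinl hF i (x := c.1 i) (by rw [hF1, hm₀]) w
  refine ⟨fun g => F g.1 + ρ (g.1, 1) (c.1 g.2), mem_contZ1_prod_of_apply_inr_sub_eq ρ hcont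
    c.2 hF hFc, fun i => ?_⟩
  show F 1 + ρ (1, 1) (c.1 i) = c.1 i
  rw [contZ1.apply_one hF, zero_add, ← Prod.one_eq_mk, map_one]
  rfl

theorem range_resH1 [Finite M]
    (hcont : Continuous fun x : (Multiplicative ZHat × I) × M => ρ x.1 x.2) :
    Set.range (resH1 ρ) = {c | ∀ z : Multiplicative ZHat, zAct I M ρ z c = c} := by
  refine Set.Subset.antisymm (Set.range_subset_iff.2 fun c z => zAct_resH1 ρ z c) fun c hc => ?_
  obtain ⟨c, rfl⟩ := QuotientAddGroup.mk_surjective c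
  obtain ⟨m₀, hm₀⟩ :=
    contH1.mk_eq_mk_iff.1 ((zAct_mk ρ (ofAdd 1) c).symm.trans (hc (ofAdd 1)))
  obtain ⟨f, hf, hfc⟩ := exists_mem_contZ1_apply_inr_eq ρ hcont c m₀ hm₀
  exact ⟨QuotientAddGroup.mk ⟨f, hf⟩, congrArg _ (Subtype.ext (funext hfc))⟩

theorem continuous_rhoZ_apply
    (hcont : Continuous fun x : (Multiplicative ZHat × I) × M => ρ x.1 x.2)
    (m : invariantsSubgroup I M (rhoI I M ρ)) :
    Continuous fun z => rhoZ I M ρ z m :=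
  (hcont.comp ((continuous_id.prodMk continuous_const).prodMk continuous_const)).subtype_mk _

def invariantsRhoZEquiv :
    invariantsSubgroup (Multiplicative ZHat) _ (rhoZ I M ρ) ≃
      invariantsSubgroup (Multiplicative ZHat × I) M ρ where
  toFun m := ⟨m.1.1, fun g => by
    rw [rho_apply_of_mem_invariants ρ g.1 g.2 m.1.2]
    exact congrArg Subtype.val (m.2 g.1)⟩
  invFun m := ⟨⟨m.1, fun i => m.2 (1, i)⟩, fun z => Subtype.ext (m.2 (z, 1))⟩
  left_inv _ := rfl
  right_inv _ := rfl

end InflationRestriction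

theorem inflation_restriction_ZHat_general
    (I : Type) [Group I] [TopologicalSpace I]
    (M : Type) [AddCommGroup M] [Finite M] [TopologicalSpace M] [DiscreteTopology M]
    (ρ : (Multiplicative ZHat × I) →* AddAut M)
    (hcont : Continuous fun x : (Multiplicative ZHat × I) × M => ρ x.1 x.2) :
    (∃ (ι : contH1 (Multiplicative ZHat) (invariantsSubgroup I M (rhoI I M ρ)) (rhoZ I M ρ) →+
          contH1 (Multiplicative ZHat × I) M ρ)
       (π : contH1 (Multiplicative ZHat × I) M ρ →+ contH1 I M (rhoI I M ρ)),
      Function.Injective ι ∧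
      (∀ c, c ∈ Set.range ι ↔ π c = 0) ∧
      Set.range π = {c | ∀ z : Multiplicative ZHat, zAct I M ρ z c = c}) ∧
    Nat.card (contH1 (Multiplicative ZHat) (invariantsSubgroup I M (rhoI I M ρ)) (rhoZ I M ρ)) =
      Nat.card (invariantsSubgroup (Multiplicative ZHat × I) M ρ) ∧
    Nat.card (contH1 (Multiplicative ZHat × I) M ρ) =
      Nat.card (invariantsSubgroup (Multiplicative ZHat × I) M ρ) *
        Nat.card {c : contH1 I M (rhoI I M ρ) // ∀ z : Multiplicative ZHat,
          zAct I M ρ z c = c} := by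
  have hexact := exact_inflH1_resH1 ρ fun m =>
    hcont.comp (continuous_id.prodMk continuous_const)
  have hcard : Nat.card (contH1 (Multiplicative ZHat) _ (rhoZ I M ρ)) =
      Nat.card (invariantsSubgroup (Multiplicative ZHat × I) M ρ) := by
    rw [ZHat.card_contH1 (continuous_rhoZ_apply ρ hcont), Nat.card_congr (invariantsRhoZEquiv ρ)]
  refine ⟨⟨inflH1 ρ, resH1 ρ, injective_inflH1 ρ, fun c => (hexact c).symm,
    range_resH1 ρ hcont⟩, hcard, ?_⟩
  rw [hexact.card_eq_card_mul_card_range (injective_inflH1 ρ), hcard]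
  exact congrArg _ (Nat.card_congr (Equiv.setCongr (range_resH1 ρ hcont)))

/-- **Inflation–restriction.**  Let `G ≅ Ẑ × I` with `I` finite cyclic act continuously on a
finite abelian group `M` (with the discrete topology).  Then there is a short exact sequence
`1 → H¹(Ẑ, M^I) → H¹(G, M) → H¹(I, M)^Ẑ → 1` of continuous cohomology groups, and in
particular `|H¹(G, M)| = |M^G| · |H¹(I, M)^G|`, where `|H¹(Ẑ, M^I)| = |M^G|`. -/
theorem inflation_restriction_ZHat
    (I : Type) [Group I] [Finite I] [IsCyclic I] [TopologicalSpace I] [DiscreteTopology I]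
    (M : Type) [AddCommGroup M] [Finite M] [TopologicalSpace M] [DiscreteTopology M]
    (ρ : (Multiplicative ZHat × I) →* AddAut M)
    (hcont : Continuous fun x : (Multiplicative ZHat × I) × M => ρ x.1 x.2) :
    (∃ (ι : contH1 (Multiplicative ZHat) (invariantsSubgroup I M (rhoI I M ρ)) (rhoZ I M ρ) →+
          contH1 (Multiplicative ZHat × I) M ρ)
       (π : contH1 (Multiplicative ZHat × I) M ρ →+ contH1 I M (rhoI I M ρ)),
      Function.Injective ι ∧
      (∀ c, c ∈ Set.range ι ↔ π c = 0) ∧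
      Set.range π = {c | ∀ z : Multiplicative ZHat, zAct I M ρ z c = c}) ∧
    Nat.card (contH1 (Multiplicative ZHat) (invariantsSubgroup I M (rhoI I M ρ)) (rhoZ I M ρ)) =
      Nat.card (invariantsSubgroup (Multiplicative ZHat × I) M ρ) ∧
    Nat.card (contH1 (Multiplicative ZHat × I) M ρ) =
      Nat.card (invariantsSubgroup (Multiplicative ZHat × I) M ρ) *
        Nat.card {c : contH1 I M (rhoI I M ρ) // ∀ z : Multiplicative ZHat,
          zAct I M ρ z c = c} :=
  inflation_restriction_ZHat_general I M ρ hcont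
end

section
/- Let H be a finite abelian p-group and α a nonzero class in H²(H, 𝔽_p) (trivial action) whose corresponding central extension 1 → 𝔽_p → H̃ → H → 1 has H̃ abelian. Then there exists a nontrivial cyclic subgroup D ≤ H whose preimage in H̃ is cyclic, and the restriction of α to H²(D, 𝔽_p) is nonzero. -/
/-!
If the kernel `⟨z⟩ ≅ 𝔽_p` of `π` were not contained in `H̃ ^ p`, a character `H̃ → 𝔽_p` nonzero
on `z` (it exists because `H̃ / H̃ ^ p` is an `𝔽_p`-vector space) would retract `H̃` onto `⟨z⟩`,
and its kernel would be a complement of `⟨z⟩` mapping isomorphically onto `H`, splitting `π`.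
Hence `z = y ^ p`. Then `D = ⟨π y⟩` has cyclic preimage `⟨y⟩ ∋ z`, and every lift of `π y` has
`p`-th power `z ≠ 1` although `(π y) ^ p = 1`, so `π` does not split over `D`.
-/

open Function Subgroup

theorem Subgroup.isComplement'_ker_of_retraction {G : Type*} [Group G] {K : Subgroup G}
    (r : G →* K) (hr : ∀ k : K, r k = k) : r.ker.IsComplement' K := by
  refine isComplement'_of_disjoint_and_mul_eq_univ ?_ ?_
  · refine disjoint_def.mpr fun {x} hxr hxK => ?_
    simpa [hr ⟨x, hxK⟩] using congrArg Subtype.val (r.mem_ker.mp hxr)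
  · refine Set.eq_univ_of_forall fun x => ⟨x * (r x)⁻¹, ?_, r x, (r x).2, inv_mul_cancel_right x _⟩
    simp [MonoidHom.mem_ker, hr]

theorem MonoidHom.exists_rightInverse_of_isComplement' {G H : Type*} [Group G] [Group H]
    {π : G →* H} (hπ : Surjective π) {N : Subgroup G} (hN : N.IsComplement' π.ker) :
    ∃ s : H →* G, ∀ h, π (s h) = h := by
  have hbij : Bijective (π.comp N.subtype) := by
    refine ⟨(injective_iff_map_eq_one _).mpr fun n hn => ?_, fun h => ?_⟩
    · exact Subtype.ext (disjoint_def.mp hN.disjoint n.2 hn)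
    · obtain ⟨x, rfl⟩ := hπ h
      obtain ⟨⟨n, k⟩, hnk⟩ := hN.2 x
      exact ⟨n, by simp [← hnk, MonoidHom.mem_ker.mp k.2]⟩
  let e := MulEquiv.ofBijective _ hbij
  exact ⟨N.subtype.comp e.symm.toMonoidHom, e.apply_symm_apply⟩

theorem exists_monoidHom_zmod_ne_one_of_pow_eq_one {Q : Type*} [CommGroup Q] (p : ℕ)
    [Fact p.Prime] (hQ : ∀ q : Q, q ^ p = 1) {q : Q} (hq : q ≠ 1) :
    ∃ χ : Q →* Multiplicative (ZMod p), χ q ≠ 1 := by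
  -- opaque on purpose: after a `let`, the search for `Module.Projective` gets stuck
  have _ : Module (ZMod p) (Additive Q) := AddCommGroup.zmodModule fun x => hQ x.toMul
  obtain ⟨φ, hφ⟩ := Module.Projective.exists_dual_ne_zero (ZMod p) (x := Additive.ofMul q) hq
  exact ⟨AddMonoidHom.toMultiplicativeRight φ.toAddMonoidHom, by simpa using hφ⟩

theorem exists_monoidHom_zmod_ne_one_of_forall_pow_ne {G : Type*} [CommGroup G] (p : ℕ)
    [Fact p.Prime] {z : G} (hz : ∀ y : G, y ^ p ≠ z) :
    ∃ χ : G →* Multiplicative (ZMod p), χ z ≠ 1 := by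
  have hexp (q : G ⧸ (powMonoidHom p : G →* G).range) : q ^ p = 1 := by
    induction q using QuotientGroup.induction_on with
    | H w => exact (QuotientGroup.eq_one_iff _).mpr ⟨w, rfl⟩
  have hz1 : (z : G ⧸ (powMonoidHom p : G →* G).range) ≠ 1 := fun h =>
    let ⟨y, hy⟩ := (QuotientGroup.eq_one_iff z).mp h
    hz y hy
  obtain ⟨χ, hχ⟩ := exists_monoidHom_zmod_ne_one_of_pow_eq_one p hexp hz1
  exact ⟨χ.comp (QuotientGroup.mk' _), hχ⟩

theorem Subgroup.exists_retraction_of_card_eq_prime {G : Type*} [Group G] {p : ℕ}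
    [hp : Fact p.Prime] {K : Subgroup G} (hK : Nat.card K = p) (χ : G →* Multiplicative (ZMod p))
    {z : G} (hzK : z ∈ K) (hz : χ z ≠ 1) : ∃ r : G →* K, ∀ k : K, r k = k := by
  have hinj : Injective (χ.comp K.subtype) := by
    have : Fact (Nat.card K).Prime := hK ▸ hp
    rw [← MonoidHom.ker_eq_bot_iff]
    refine (eq_bot_or_eq_top_of_prime_card _).resolve_right fun htop => hz ?_
    simpa using (htop ▸ mem_top _ : (⟨z, hzK⟩ : K) ∈ (χ.comp K.subtype).ker)
  have hbij : Bijective (χ.comp K.subtype) :=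
    (Nat.bijective_iff_injective_and_card _).mpr ⟨hinj, by simp [hK]⟩
  let e := MulEquiv.ofBijective _ hbij
  exact ⟨e.symm.toMonoidHom.comp χ, e.symm_apply_apply⟩

theorem MonoidHom.exists_pow_eq_of_not_exists_rightInverse {G H : Type*} [CommGroup G] [Group H]
    {p : ℕ} [Fact p.Prime] {π : G →* H} (hπ : Surjective π) (hker : Nat.card π.ker = p)
    (hns : ¬ ∃ s : H →* G, ∀ h, π (s h) = h) {z : G} (hz : z ∈ π.ker) : ∃ y : G, y ^ p = z := by
  by_contra! hpow
  obtain ⟨χ, hχ⟩ := exists_monoidHom_zmod_ne_one_of_forall_pow_ne p hpow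
  obtain ⟨r, hr⟩ := exists_retraction_of_card_eq_prime hker χ hz hχ
  exact hns (π.exists_rightInverse_of_isComplement' hπ (isComplement'_ker_of_retraction r hr))

theorem Subgroup.eq_zpowers_of_card_eq_prime {G : Type*} [Group G] {p : ℕ} [Fact p.Prime]
    {K : Subgroup G} (hK : Nat.card K = p) {z : G} (hzK : z ∈ K) (hz : z ≠ 1) :
    K = zpowers z := by
  have htop : zpowers (⟨z, hzK⟩ : K) = ⊤ := zpowers_eq_top_of_prime_card hK (by simpa using hz)
  rw [← K.range_subtype, MonoidHom.range_eq_map, ← htop, MonoidHom.map_zpowers, coe_subtype]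

theorem MonoidHom.not_exists_lift_zpowers {G H : Type*} [CommGroup G] [Group H] (π : G →* H)
    {p : ℕ} (hker : ∀ k ∈ π.ker, k ^ p = 1) {y : G} (hy : y ^ p ∈ π.ker) (hyp : y ^ p ≠ 1) :
    ¬ ∃ s : zpowers (π y) →* G, ∀ d, π (s d) = d := by
  rintro ⟨s, hs⟩
  set u := s ⟨π y, mem_zpowers _⟩
  have hu : u ^ p = 1 := by
    rw [← map_pow, ← s.map_one]
    congr 1
    ext
    simpa using hy
  have hlift : u * y⁻¹ ∈ π.ker := by
    simp [MonoidHom.mem_ker, u, hs]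
  have := hker _ hlift
  rw [mul_pow, hu, one_mul, inv_pow, inv_eq_one] at this
  exact hyp this

theorem exists_cyclic_subgroup_nonsplit_general (p : ℕ) (hp : p.Prime)
    (H : Type*) [CommGroup H]
    (Htil : Type*) [CommGroup Htil]
    (π : Htil →* H) (hsurj : Function.Surjective π)
    (hker : Nat.card π.ker = p)
    (hnonsplit : ¬ ∃ s : H →* Htil, ∀ h : H, π (s h) = h) :
    ∃ D : Subgroup H, D ≠ ⊥ ∧ IsCyclic D ∧ IsCyclic (D.comap π) ∧
      ¬ ∃ s : D →* Htil, ∀ d : D, π (s d) = (d : H) := by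
  have : Fact p.Prime := ⟨hp⟩
  have hexp (k : Htil) (hk : k ∈ π.ker) : k ^ p = 1 := by
    have h := pow_card_eq_one' (x := (⟨k, hk⟩ : π.ker))
    rw [hker] at h
    exact congrArg Subtype.val h
  obtain ⟨z, hzK, hz⟩ := π.ker.bot_or_exists_ne_one.resolve_left fun h =>
    hp.ne_one (by rw [← hker, h, card_bot])
  obtain ⟨y, rfl⟩ := π.exists_pow_eq_of_not_exists_rightInverse hsurj hker hnonsplit hzK
  have hker_le : π.ker ≤ zpowers y := by
    rw [eq_zpowers_of_card_eq_prime hker hzK hz, zpowers_le]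
    exact pow_mem (mem_zpowers y) p
  refine ⟨zpowers (π y), ?_, inferInstance, ?_, π.not_exists_lift_zpowers hexp hzK hz⟩
  · exact fun h => hz (hexp y (zpowers_eq_bot.mp h))
  · rw [← MonoidHom.map_zpowers, comap_map_eq_self hker_le]
    infer_instance

/-- Let `H` be a finite abelian `p`-group and `α ∈ H²(H, 𝔽_p)` a nonzero class (trivial
action) whose corresponding central extension `1 → 𝔽_p → H̃ → H → 1` has `H̃` abelian.
(We phrase this via the extension itself: `π : H̃ → H` surjective with kernel of order `p`
and no splitting, corresponding to `α ≠ 0`.)  Then there exists a nontrivial cyclic subgroup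
`D ≤ H` whose preimage in `H̃` is cyclic and such that the restriction of `α` to
`H²(D, 𝔽_p)` is nonzero, i.e. the pulled-back extension `1 → 𝔽_p → π⁻¹(D) → D → 1`
does not split. -/
theorem exists_cyclic_subgroup_nonsplit (p : ℕ) (hp : p.Prime)
    (H : Type*) [CommGroup H] [Finite H] (hH : IsPGroup p H)
    (Htil : Type*) [CommGroup Htil] [Finite Htil]
    (π : Htil →* H) (hsurj : Function.Surjective π)
    (hker : Nat.card π.ker = p)
    (hnonsplit : ¬ ∃ s : H →* Htil, ∀ h : H, π (s h) = h) :
    ∃ D : Subgroup H, D ≠ ⊥ ∧ IsCyclic D ∧ IsCyclic (D.comap π) ∧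
      ¬ ∃ s : D →* Htil, ∀ d : D, π (s d) = (d : H) :=
  exists_cyclic_subgroup_nonsplit_general p hp H Htil π hsurj hker hnonsplit
end

section
/- Let A be a finite abelian p-group, p an odd prime, e a nontrivial primitive idempotent of ℚ_p[A], and eℤ_p[A] := {ex : x ∈ ℤ_p[A]} ⊆ ℚ_p[A]. Then eℤ_p[A] is a local ring; moreover, if A is elementary abelian (exponent p), then p·eℤ_p[A] is contained in the ideal I_e := ⋂_{γ ∈ A, γ ≠ 0} (1−γ, Σ_{j=1}^{ord γ} γ^j)·eℤ_p[A]. -/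
/-!
`ℤ_p[A]` is finite over the local ring `ℤ_p`, so every maximal ideal `M` of it contracts to
`(p)`. In the field `ℤ_p[A] ⧸ M` of characteristic `p` every element of `A`, having `p`-power
order, becomes `1`; hence `M` is the kernel of the augmentation followed by reduction mod `p`.
So `ℤ_p[A]` is local, and so is its nonzero quotient `e ℤ_p[A]`. For the second claim,
`ord γ = p` and `n = ∑_{j<n} γ^{j+1} + (1 - γ) ∑_{j<n} ∑_{i≤j} γ^i` for every `n`.
-/

open MonoidAlgebra

/-- The coefficient-extension map `ℤ_p[A] → ℚ_p[A]`. -/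
noncomputable def coeffMap (p : ℕ) [Fact p.Prime] (A : Type) [CommGroup A] :
    MonoidAlgebra ℤ_[p] A →ₐ[ℤ_[p]] MonoidAlgebra ℚ_[p] A :=
  MonoidAlgebra.lift ℤ_[p] (MonoidAlgebra ℚ_[p] A) A (MonoidAlgebra.of ℚ_[p] A)

/-- The kernel of `x ↦ e·x : ℤ_p[A] → e ℚ_p[A]`; the ring `e ℤ_p[A]` is the quotient of
`ℤ_p[A]` by this ideal. -/
noncomputable def eKernel (p : ℕ) [Fact p.Prime] (A : Type) [CommGroup A]
    (e : MonoidAlgebra ℚ_[p] A) : Ideal (MonoidAlgebra ℤ_[p] A) where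
  carrier := {x | e * coeffMap p A x = 0}
  zero_mem' := by simp
  add_mem' := fun {x y} hx hy => by
    simp only [Set.mem_setOf_eq] at *
    rw [map_add, mul_add, hx, hy, add_zero]
  smul_mem' := fun c x hx => by
    simp only [Set.mem_setOf_eq, smul_eq_mul] at *
    rw [map_mul, mul_left_comm, hx, mul_zero]

open IsLocalRing

namespace MonoidAlgebra

variable {k G : Type*} [CommRing k] [CommGroup G]

variable (k G) in
noncomputable abbrev augmentation : MonoidAlgebra k G →ₐ[k] k :=
  lift k k G 1

theorem eq_comap_augmentation_of_isMaximal {p : ℕ} [Fact p.Prime] (hG : IsPGroup p G)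
    {M : Ideal (MonoidAlgebra k G)} [M.IsMaximal] (hpM : (p : MonoidAlgebra k G) ∈ M) :
    M = (M.comap (algebraMap k (MonoidAlgebra k G))).comap (augmentation k G) := by
  let := Ideal.Quotient.field M
  have : CharP (MonoidAlgebra k G ⧸ M) p :=
    (CharP.charP_iff_prime_eq_zero Fact.out).2 (Ideal.Quotient.eq_zero_iff_mem.2 hpM)
  -- Frobenius is injective on the field `k[G] ⧸ M`, so elements of `p`-power order map to `1`.
  have of_eq_one : ∀ g, Ideal.Quotient.mk M (of k G g) = 1 := fun g => by
    obtain ⟨n, hn⟩ := hG g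
    have : Ideal.Quotient.mk M (of k G g) ^ (p ^ n * 1) = 1 := by
      rw [mul_one, ← map_pow, ← map_pow, hn, map_one, map_one]
    simpa using (ExpChar.pow_prime_pow_mul_eq_one_iff p n 1 _).1 this
  have hmk : Ideal.Quotient.mkₐ k M = (Algebra.ofId k _).comp (augmentation k G) :=
    algHom_ext (fun g => by
      rw [← of_apply, AlgHom.comp_apply, lift_of, MonoidHom.one_apply, map_one,
        Ideal.Quotient.mkₐ_eq_mk, of_eq_one]) (Subsingleton.elim _ _)
  ext x
  have hx := DFunLike.congr_fun hmk x
  rw [Ideal.Quotient.mkₐ_eq_mk, AlgHom.comp_apply, Algebra.ofId_apply] at hx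
  rw [Ideal.mem_comap, Ideal.mem_comap, ← Ideal.Quotient.eq_zero_iff_mem,
    ← Ideal.Quotient.eq_zero_iff_mem, Ideal.Quotient.mk_algebraMap, hx]

theorem isLocalRing_of_isPGroup [IsLocalRing k] [Finite G] {p : ℕ} [Fact p.Prime]
    (hp : (p : k) ∈ maximalIdeal k) (hG : IsPGroup p G) : IsLocalRing (MonoidAlgebra k G) := by
  have eq_comap : ∀ M : Ideal (MonoidAlgebra k G), M.IsMaximal →
      M = (maximalIdeal k).comap (augmentation k G) := by
    intro M hM
    have hcomap : M.comap (algebraMap k (MonoidAlgebra k G)) = maximalIdeal k :=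
      eq_maximalIdeal (Ideal.isMaximal_comap_of_isIntegral_of_isMaximal M)
    have hpM : (p : MonoidAlgebra k G) ∈ M := by
      simpa [← hcomap] using hp
    rw [← hcomap]
    exact eq_comap_augmentation_of_isMaximal hG hpM
  obtain ⟨M, hM⟩ := Ideal.exists_maximal (MonoidAlgebra k G)
  exact of_unique_max_ideal ⟨M, hM, fun N hN => (eq_comap N hN).trans (eq_comap M hM).symm⟩

end MonoidAlgebra

theorem natCast_mem_span_one_sub_geom_sum {S : Type*} [CommRing S] (x : S) (n : ℕ) :
    (n : S) ∈ Ideal.span {1 - x, ∑ j ∈ Finset.range n, x ^ (j + 1)} := by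
  refine Ideal.mem_span_pair.2 ⟨∑ j ∈ Finset.range n, ∑ i ∈ Finset.range (j + 1), x ^ i, 1, ?_⟩
  calc (∑ j ∈ Finset.range n, ∑ i ∈ Finset.range (j + 1), x ^ i) * (1 - x) +
        1 * ∑ j ∈ Finset.range n, x ^ (j + 1)
      = ∑ j ∈ Finset.range n, (1 - x ^ (j + 1)) + ∑ j ∈ Finset.range n, x ^ (j + 1) := by
        rw [one_mul, Finset.sum_mul]
        simp only [geom_sum_mul_neg]
    _ = n := by simp [Finset.sum_sub_distrib]

theorem eKernel_ne_top {p : ℕ} [Fact p.Prime] {A : Type} [CommGroup A]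
    {e : MonoidAlgebra ℚ_[p] A} (hne : e ≠ 0) : eKernel p A e ≠ ⊤ := by
  rw [Ne, Ideal.eq_top_iff_one]
  change ¬ e * coeffMap p A 1 = 0
  simpa using hne

theorem eZpA_isLocalRing_and_p_mem_Ie_general (p : ℕ) [Fact p.Prime]
    (A : Type) [CommGroup A] [Fintype A] (hA : ∀ a : A, ∃ n : ℕ, a ^ (p ^ n) = 1)
    (e : MonoidAlgebra ℚ_[p] A)
    (hne : e ≠ 0) :
    IsLocalRing (MonoidAlgebra ℤ_[p] A ⧸ eKernel p A e) ∧
    ((∀ a : A, a ^ p = 1) →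
      Ideal.span {(p : MonoidAlgebra ℤ_[p] A ⧸ eKernel p A e)} ≤
        ⨅ γ ∈ {γ : A | γ ≠ 1},
          Ideal.span {Ideal.Quotient.mk (eKernel p A e) (1 - MonoidAlgebra.of ℤ_[p] A γ),
            Ideal.Quotient.mk (eKernel p A e)
              (∑ j ∈ Finset.range (orderOf γ), (MonoidAlgebra.of ℤ_[p] A γ) ^ (j + 1))}) := by
  have : Nontrivial (MonoidAlgebra ℤ_[p] A ⧸ eKernel p A e) :=
    Ideal.Quotient.nontrivial_iff.2 (eKernel_ne_top hne)
  have : IsLocalRing (MonoidAlgebra ℤ_[p] A) :=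
    MonoidAlgebra.isLocalRing_of_isPGroup PadicInt.p_nonunit hA
  refine ⟨.of_surjective' _ Ideal.Quotient.mk_surjective, fun hexp => ?_⟩
  rw [Ideal.span_le, Set.singleton_subset_iff, SetLike.mem_coe]
  refine Ideal.mem_iInf.2 fun γ => Ideal.mem_iInf.2 fun hγ => ?_
  rw [orderOf_eq_prime (hexp γ) hγ]
  simpa only [map_sub, map_one, map_sum, map_pow] using
    natCast_mem_span_one_sub_geom_sum
      (Ideal.Quotient.mk (eKernel p A e) (MonoidAlgebra.of ℤ_[p] A γ)) p

/-- Let `A` be a finite abelian `p`-group (`p` odd), `e` a nontrivial primitive idempotent of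
`ℚ_p[A]`, and `e ℤ_p[A] ≅ ℤ_p[A]/ker(x ↦ ex)` the associated quotient ring.  Then
`e ℤ_p[A]` is a local ring; moreover, if `A` is elementary abelian then
`p · e ℤ_p[A] ⊆ I_e := ⋂_{γ ≠ 1} (1 − γ, Σ_{j=1}^{ord γ} γ^j) e ℤ_p[A]`. -/
theorem eZpA_isLocalRing_and_p_mem_Ie (p : ℕ) (hp : p.Prime) [Fact p.Prime] (hodd : Odd p)
    (A : Type) [CommGroup A] [Fintype A] (hA : ∀ a : A, ∃ n : ℕ, a ^ (p ^ n) = 1)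
    (e : MonoidAlgebra ℚ_[p] A)
    (hidem : e * e = e) (hne : e ≠ 0)
    (hprim : ¬ ∃ f g : MonoidAlgebra ℚ_[p] A,
      f ≠ 0 ∧ g ≠ 0 ∧ f * f = f ∧ g * g = g ∧ f * g = 0 ∧ e = f + g)
    (hnontriv : e ≠ (Nat.card A : ℚ_[p])⁻¹ • ∑ γ : A, MonoidAlgebra.of ℚ_[p] A γ) :
    IsLocalRing (MonoidAlgebra ℤ_[p] A ⧸ eKernel p A e) ∧
    ((∀ a : A, a ^ p = 1) →
      Ideal.span {(p : MonoidAlgebra ℤ_[p] A ⧸ eKernel p A e)} ≤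
        ⨅ γ ∈ {γ : A | γ ≠ 1},
          Ideal.span {Ideal.Quotient.mk (eKernel p A e) (1 - MonoidAlgebra.of ℤ_[p] A γ),
            Ideal.Quotient.mk (eKernel p A e)
              (∑ j ∈ Finset.range (orderOf γ), (MonoidAlgebra.of ℤ_[p] A γ) ^ (j + 1))}) :=
  eZpA_isLocalRing_and_p_mem_Ie_general p A hA e hne
end
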